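/- arXiv:1602.04916 — 5 statements merged into one kernel-verified Lean document; each statement's English description precedes it below -/
import Mathlib

section
/- Consider the set I of points p of the complex projective plane ℙ²(ℂ) at which both F = X³ − XZ² − Y²Z and its Hessian H = 24X²Z − 24XY² + 8Z³ vanish (the set of inflexion points of the smooth cubic C). Then I has exactly 9 elements; moreover, a point of the form [a:b:1] with a, b ∈ ℂ belongs to I if and only if b² = a³ − a and 3a⁴ − 6a² − 1 = 0. -/
/-- The cubic `F = X³ - XZ² - Y²Z` evaluated at a vector of `ℂ³`. -/
noncomputable def Fval (v : Fin 3 → ℂ) : ℂ := v 0 ^ 3 - v 0 * v 2 ^ 2 - v 1 ^ 2 * v 2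

/-- The Hessian `H = 24X²Z - 24XY² + 8Z³` of `F` evaluated at a vector of `ℂ³`. -/
noncomputable def Hval (v : Fin 3 → ℂ) : ℂ :=
  24 * v 0 ^ 2 * v 2 - 24 * v 0 * v 1 ^ 2 + 8 * v 2 ^ 3

open Polynomial Projectivization

noncomputable def qpoly : ℂ[X] := C 3 * X ^ 4 - C 6 * X ^ 2 - C 1

lemma qpoly_eval (a : ℂ) : qpoly.eval a = 3 * a ^ 4 - 6 * a ^ 2 - 1 := by simp [qpoly]

lemma qpoly_natDegree : qpoly.natDegree = 4 := by unfold qpoly; compute_degree!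

lemma qpoly_ne_zero : qpoly ≠ 0 := by
  intro h; have := qpoly_natDegree; rw [h] at this; simp at this

lemma deriv_q : derivative qpoly = C 12 * X ^ 3 - C 12 * X := by
  unfold qpoly
  simp only [derivative_sub, derivative_mul, derivative_C, derivative_X_pow, derivative_one]
  simp only [map_ofNat, C_1, C_eq_natCast]
  push_cast
  ring

lemma qpoly_sep : qpoly.Separable := by
  refine ⟨C (1/16) * (C 12 * X ^ 2 - C 16), C (1/16) * (C 7 * X - C 3 * X ^ 3), ?_⟩
  rw [deriv_q]
  unfold qpoly
  have h : (C ((1:ℂ)/16)) * 16 = 1 := by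
    rw [show ((16:ℂ[X])) = C 16 by simp [map_ofNat], ← C_mul]
    norm_num
  simp only [map_ofNat, C_1]
  linear_combination h

/-- the finset of roots of the quartic -/
noncomputable def Afin : Finset ℂ := qpoly.roots.toFinset

lemma mem_Afin {a : ℂ} : a ∈ Afin ↔ 3 * a ^ 4 - 6 * a ^ 2 - 1 = 0 := by
  rw [Afin, Multiset.mem_toFinset, mem_roots qpoly_ne_zero, IsRoot, qpoly_eval]

lemma card_Afin : Afin.card = 4 := by
  rw [Afin, Multiset.toFinset_card_of_nodup (Polynomial.nodup_roots qpoly_sep)]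
  rw [← qpoly_natDegree]
  exact (Polynomial.splits_iff_card_roots.mp (IsAlgClosed.splits qpoly))

/-- a choice of square root on ℂ -/
noncomputable def csqrt (c : ℂ) : ℂ := Classical.choose (IsAlgClosed.exists_pow_nat_eq c two_pos)

lemma csqrt_sq (c : ℂ) : csqrt c ^ 2 = c := Classical.choose_spec (IsAlgClosed.exists_pow_nat_eq c two_pos)

lemma sq_eq_iff {b c : ℂ} : b ^ 2 = c ↔ b = csqrt c ∨ b = -csqrt c := by
  constructor
  · intro h
    have h2 : b ^ 2 = csqrt c ^ 2 := by rw [csqrt_sq, h]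
    exact sq_eq_sq_iff_eq_or_eq_neg.mp h2
  · rintro (rfl | rfl)
    · exact csqrt_sq c
    · rw [show (-csqrt c) ^ 2 = csqrt c ^ 2 from by ring, csqrt_sq]

/-- root of quartic implies a³ - a ≠ 0 -/
lemma root_ne {a : ℂ} (ha : 3 * a ^ 4 - 6 * a ^ 2 - 1 = 0) : a ^ 3 - a ≠ 0 := by
  intro h
  have h1 : (-1 : ℂ) = 0 := by
    linear_combination (1 - 3*a^2/4) * ha + (9/4*a^3 - 21/4*a) * h
  norm_num at h1

lemma csqrt_ne {a : ℂ} (ha : 3 * a ^ 4 - 6 * a ^ 2 - 1 = 0) :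
    csqrt (a ^ 3 - a) ≠ -csqrt (a ^ 3 - a) := by
  intro h
  apply root_ne ha
  rw [← csqrt_sq (a ^ 3 - a)]
  have h0 : csqrt (a ^ 3 - a) = 0 := by
    have := add_eq_zero_iff_eq_neg.mpr h
    ring_nf at this ⊢
    simpa using this
  rw [h0]; ring

noncomputable def Tfin : Finset (ℂ × ℂ) :=
  Afin.biUnion fun a => {(a, csqrt (a^3 - a)), (a, -csqrt (a^3 - a))}

lemma mem_Tfin {a b : ℂ} :
    (a, b) ∈ Tfin ↔ 3 * a ^ 4 - 6 * a ^ 2 - 1 = 0 ∧ b ^ 2 = a ^ 3 - a := by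
  simp only [Tfin, Finset.mem_biUnion, Finset.mem_insert, Finset.mem_singleton, Prod.mk.injEq]
  constructor
  · rintro ⟨x, hx, ⟨rfl, h⟩ | ⟨rfl, h⟩⟩
    · exact ⟨mem_Afin.mp hx, by rw [h, csqrt_sq]⟩
    · refine ⟨mem_Afin.mp hx, ?_⟩
      rw [h, show (-csqrt (a^3-a)) ^ 2 = csqrt (a^3-a) ^ 2 from by ring, csqrt_sq]
  · rintro ⟨ha, hb⟩
    exact ⟨a, mem_Afin.mpr ha, by rcases sq_eq_iff.mp hb with h | h <;> simp [h]⟩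

lemma card_Tfin : Tfin.card = 8 := by
  rw [Tfin, Finset.card_biUnion]
  · rw [Finset.sum_congr rfl fun a ha => show
        ({(a, csqrt (a^3 - a)), (a, -csqrt (a^3 - a))} : Finset (ℂ × ℂ)).card = 2 from by
      rw [Finset.card_insert_of_notMem, Finset.card_singleton]
      simp only [Finset.mem_singleton, Prod.mk.injEq, not_and]
      exact fun _ => csqrt_ne (mem_Afin.mp ha)]
    rw [Finset.sum_const, card_Afin]
    rfl
  · intro x hx y hy hxy
    simp only [Finset.disjoint_left, Finset.mem_insert, Finset.mem_singleton]
    intro p hp hp'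
    rcases hp with h | h <;> rcases hp' with h' | h' <;>
      exact hxy ((congrArg Prod.fst h).symm.trans (congrArg Prod.fst h'))

lemma fval_smul (c : ℂ) (v : Fin 3 → ℂ) : Fval (c • v) = c ^ 3 * Fval v := by
  simp only [Fval, Pi.smul_apply, smul_eq_mul]; ring

lemma hval_smul (c : ℂ) (v : Fin 3 → ℂ) : Hval (c • v) = c ^ 3 * Hval v := by
  simp only [Hval, Pi.smul_apply, smul_eq_mul]; ring

lemma rep_iff {v : Fin 3 → ℂ} (hv : v ≠ 0) :
    (Fval (Projectivization.mk ℂ v hv).rep = 0 ∧ Hval (Projectivization.mk ℂ v hv).rep = 0) ↔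
      (Fval v = 0 ∧ Hval v = 0) := by
  obtain ⟨c, hc⟩ := exists_smul_eq_mk_rep ℂ v hv
  rw [← hc, Units.smul_def, fval_smul, hval_smul]
  have hc0 : (c : ℂ) ≠ 0 := c.ne_zero
  simp [mul_eq_zero, pow_eq_zero_iff, hc0]

lemma affine_ne (a b : ℂ) : (![a, b, 1] : Fin 3 → ℂ) ≠ 0 :=
  fun h => by simpa using congrFun h 2

lemma inf_ne : (![0, 1, 0] : Fin 3 → ℂ) ≠ 0 :=
  fun h => by simpa using congrFun h 1

lemma mk_affine_inj {a b a' b' : ℂ}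
    (h : Projectivization.mk ℂ ![a, b, 1] (affine_ne a b) =
      Projectivization.mk ℂ ![a', b', 1] (affine_ne a' b')) : a = a' ∧ b = b' := by
  rw [mk_eq_mk_iff] at h
  obtain ⟨c, hc⟩ := h
  have h2 := congrFun hc 2
  have h0 := congrFun hc 0
  have h1 := congrFun hc 1
  simp only [Units.smul_def, Pi.smul_apply, smul_eq_mul, Matrix.cons_val_zero,
    Matrix.cons_val_one, Matrix.head_cons, Matrix.cons_val_two, Matrix.tail_cons] at h0 h1 h2
  rw [mul_one] at h2
  rw [h2, one_mul] at h0 h1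
  exact ⟨h0.symm, h1.symm⟩

lemma mk_affine_ne_inf (a b : ℂ) :
    Projectivization.mk ℂ ![a, b, 1] (affine_ne a b) ≠ Projectivization.mk ℂ ![0, 1, 0] inf_ne := by
  rw [Ne, mk_eq_mk_iff]
  rintro ⟨c, hc⟩
  have h2 := congrFun hc 2
  simp only [Units.smul_def, Pi.smul_apply, smul_eq_mul, Matrix.cons_val_two,
    Matrix.tail_cons, Matrix.head_cons] at h2
  rw [mul_zero] at h2
  exact one_ne_zero h2.symm

/-- The set of inflexion points of the smooth cubic `C : F = 0` in `ℙ²(ℂ)`, i.e. the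
points where both `F` and its Hessian `H` vanish, has exactly `9` elements; moreover an
affine point `[a : b : 1]` is an inflexion point iff `b² = a³ - a` and `3a⁴ - 6a² - 1 = 0`. -/
theorem stmt_5 :
    let I : Set (Projectivization ℂ (Fin 3 → ℂ)) :=
      {p | Fval p.rep = 0 ∧ Hval p.rep = 0}
    I.ncard = 9 ∧
      ∀ a b : ℂ,
        (Projectivization.mk ℂ (![a, b, 1] : Fin 3 → ℂ)
            (fun h => by simpa using congrFun h 2) ∈ I ↔
          b ^ 2 = a ^ 3 - a ∧ 3 * a ^ 4 - 6 * a ^ 2 - 1 = 0) := by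
  intro I
  have hmem : ∀ a b : ℂ, (Projectivization.mk ℂ ![a, b, 1] (affine_ne a b) ∈ I ↔
      b ^ 2 = a ^ 3 - a ∧ 3 * a ^ 4 - 6 * a ^ 2 - 1 = 0) := by
    intro a b
    show (Fval _ = 0 ∧ Hval _ = 0) ↔ _
    rw [rep_iff]
    have hF : Fval ![a, b, 1] = a ^ 3 - a - b ^ 2 := by
      simp [Fval]
    have hH : Hval ![a, b, 1] = 24 * a ^ 2 - 24 * a * b ^ 2 + 8 := by
      simp [Hval]
    rw [hF, hH]
    constructor
    · rintro ⟨h1, h2⟩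
      refine ⟨by linear_combination -h1, by linear_combination 3 * a * h1 - (1/8) * h2⟩
    · rintro ⟨h1, h2⟩
      refine ⟨by linear_combination -h1, by linear_combination (-24 * a) * h1 - 8 * h2⟩
  have hIeq : I = insert (Projectivization.mk ℂ ![0, 1, 0] inf_ne)
      ((fun ab : ℂ × ℂ => Projectivization.mk ℂ ![ab.1, ab.2, 1] (affine_ne ab.1 ab.2)) '' ↑Tfin) := by
    ext p
    constructor
    · intro hp
      obtain ⟨hF, hH⟩ := hp
      by_cases h2 : p.rep 2 = 0
      · have h0 : p.rep 0 = 0 := by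
          have hFv : Fval p.rep = (p.rep 0) ^ 3 := by simp [Fval, h2]
          rw [hFv] at hF
          exact pow_eq_zero_iff (by norm_num) |>.mp hF
        have h1 : p.rep 1 ≠ 0 := by
          intro h1
          apply p.rep_nonzero
          funext i; fin_cases i <;> simp [h0, h1, h2]
        refine Set.mem_insert_iff.mpr (Or.inl ?_)
        rw [← p.mk_rep, mk_eq_mk_iff]
        refine ⟨Units.mk0 (p.rep 1) h1, ?_⟩
        funext i
        fin_cases i <;> simp [Units.smul_def, h0, h2]
      · set a := p.rep 0 / p.rep 2 with ha
        set b := p.rep 1 / p.rep 2 with hb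
        have hp' : p = Projectivization.mk ℂ ![a, b, 1] (affine_ne a b) := by
          rw [← p.mk_rep, mk_eq_mk_iff]
          refine ⟨Units.mk0 (p.rep 2) h2, ?_⟩
          funext i
          fin_cases i <;> simp [Units.smul_def, ha, hb] <;> field_simp
        refine Set.mem_insert_iff.mpr (Or.inr ⟨(a, b), ?_, hp'.symm⟩)
        rw [Finset.mem_coe, mem_Tfin]
        have hc := (hmem a b).mp (hp' ▸ ⟨hF, hH⟩)
        exact ⟨hc.2, hc.1⟩
    · intro hp
      rcases hp with rfl | ⟨⟨a, b⟩, hT, rfl⟩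
      · show Fval _ = 0 ∧ Hval _ = 0
        rw [rep_iff]
        constructor <;> simp [Fval, Hval]
      · exact (hmem a b).mpr ⟨(mem_Tfin.mp hT).2, (mem_Tfin.mp hT).1⟩
  constructor
  · rw [hIeq]
    have hnot : Projectivization.mk ℂ ![0, 1, 0] inf_ne ∉
        ((fun ab : ℂ × ℂ => Projectivization.mk ℂ ![ab.1, ab.2, 1] (affine_ne ab.1 ab.2)) '' ↑Tfin) := by
      rintro ⟨⟨a, b⟩, -, h⟩
      exact mk_affine_ne_inf a b h
    have hinj : Set.InjOn (fun ab : ℂ × ℂ => Projectivization.mk ℂ ![ab.1, ab.2, 1]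
        (affine_ne ab.1 ab.2)) ↑Tfin := by
      rintro ⟨a, b⟩ - ⟨a', b'⟩ - h
      obtain ⟨h1, h2⟩ := mk_affine_inj h
      exact Prod.ext h1 h2
    rw [Set.ncard_insert_of_notMem hnot (Set.Finite.image _ Tfin.finite_toSet),
      Set.ncard_image_of_injOn hinj, Set.ncard_coe_finset, card_Tfin]
  · intro a b
    exact hmem a b
end

section
/- Let α = √(1 + 2√3/3), β = √(α³ − α) and c = √(2√3/3 − 1) be positive real numbers, regarded as complex. The five points [0:1:0], [−α:iβ:1], [−α:−iβ:1], [α:β:1], [α:−β:1] of ℙ²(ℂ) are pairwise distinct, each lies on the cubic F = X³ − XZ² − Y²Z = 0, each is an inflexion point of C (the Hessian H = 24X²Z − 24XY² + 8Z³ vanishes there), and each lies on the conic X² − α²Z² = 0. (These are the five tangency points P₀, P₁, P₂, P₃, P₄ of the curve C^{[5,6]}, and the conic through them is the pair of lines (P₁P₂) ∪ (P₃P₄).) -/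
open Complex

noncomputable def stmt7ar : ℝ := Real.sqrt (1 + 2 * Real.sqrt 3 / 3)
noncomputable def stmt7br : ℝ := Real.sqrt (stmt7ar ^ 3 - stmt7ar)

lemma stmt7_hs3 : Real.sqrt 3 ^ 2 = 3 := Real.sq_sqrt (by norm_num)
lemma stmt7_hs3pos : (0:ℝ) < Real.sqrt 3 := Real.sqrt_pos.mpr (by norm_num)
lemma stmt7_har2 : stmt7ar ^ 2 = 1 + 2 * Real.sqrt 3 / 3 := Real.sq_sqrt (by positivity)
lemma stmt7_harpos : 0 < stmt7ar := Real.sqrt_pos.mpr (by positivity)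
lemma stmt7_hb_arg : 0 < stmt7ar ^ 3 - stmt7ar := by
  nlinarith [stmt7_har2, stmt7_harpos, stmt7_hs3pos]
lemma stmt7_hbr2 : stmt7br ^ 2 = stmt7ar ^ 3 - stmt7ar := Real.sq_sqrt stmt7_hb_arg.le
lemma stmt7_hbrpos : 0 < stmt7br := Real.sqrt_pos.mpr stmt7_hb_arg
lemma stmt7_hH : 24 * stmt7ar ^ 2 - 24 * stmt7ar * stmt7br ^ 2 + 8 = 0 := by
  nlinarith [stmt7_hbr2, stmt7_har2, stmt7_hs3, stmt7_harpos]

lemma stmt7_rep_eq_smul {v : Fin 3 → ℂ} (hv : v ≠ 0) :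
    ∃ a : ℂˣ, (Projectivization.mk ℂ v hv).rep = a • v := by
  obtain ⟨a, ha⟩ := (Projectivization.mk_eq_mk_iff ℂ _ _ _ hv).mp
    (Projectivization.mk_rep (Projectivization.mk ℂ v hv))
  exact ⟨a, ha.symm⟩

lemma stmt7_key (α : ℂ) (v : Fin 3 → ℂ) (hv : v ≠ 0)
    (h1 : Fval v = 0) (h2 : Hval v = 0) (h3 : v 0 ^ 2 - α ^ 2 * v 2 ^ 2 = 0) :
    Fval (Projectivization.mk ℂ v hv).rep = 0 ∧ Hval (Projectivization.mk ℂ v hv).rep = 0 ∧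
      (Projectivization.mk ℂ v hv).rep 0 ^ 2 -
        α ^ 2 * (Projectivization.mk ℂ v hv).rep 2 ^ 2 = 0 := by
  obtain ⟨a, ha⟩ := stmt7_rep_eq_smul hv
  rw [ha]
  simp only [Fval, Hval, Pi.smul_apply, Units.smul_def, smul_eq_mul] at *
  refine ⟨by linear_combination (a:ℂ)^3 * h1, by linear_combination (a:ℂ)^3 * h2,
    by linear_combination (a:ℂ)^2 * h3⟩

/-- The five points `P₀ = [0:1:0]`, `P₁ = [-α:iβ:1]`, `P₂ = [-α:-iβ:1]`, `P₃ = [α:β:1]`,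
`P₄ = [α:-β:1]` of `ℙ²(ℂ)` are pairwise distinct, lie on the cubic `F = 0`, are inflexion
points of it (the Hessian `H` vanishes there), and lie on the conic `X² - α²Z² = 0`. -/
theorem stmt_7 :
    let α : ℂ := (Real.sqrt (1 + 2 * Real.sqrt 3 / 3) : ℝ)
    let β : ℂ := (Real.sqrt (Real.sqrt (1 + 2 * Real.sqrt 3 / 3) ^ 3 -
      Real.sqrt (1 + 2 * Real.sqrt 3 / 3)) : ℝ)
    let P : Fin 5 → Projectivization ℂ (Fin 3 → ℂ) :=
      ![Projectivization.mk ℂ (![0, 1, 0] : Fin 3 → ℂ)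
          (fun h => by simpa using congrFun h 1),
        Projectivization.mk ℂ (![-α, I * β, 1] : Fin 3 → ℂ)
          (fun h => by simpa using congrFun h 2),
        Projectivization.mk ℂ (![-α, -(I * β), 1] : Fin 3 → ℂ)
          (fun h => by simpa using congrFun h 2),
        Projectivization.mk ℂ (![α, β, 1] : Fin 3 → ℂ)
          (fun h => by simpa using congrFun h 2),
        Projectivization.mk ℂ (![α, -β, 1] : Fin 3 → ℂ)
          (fun h => by simpa using congrFun h 2)]
    Function.Injective P ∧
      ∀ k : Fin 5,
        Fval (P k).rep = 0 ∧ Hval (P k).rep = 0 ∧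
          (P k).rep 0 ^ 2 - α ^ 2 * (P k).rep 2 ^ 2 = 0 := by
  intro α β P
  have hαdef : α = (stmt7ar : ℂ) := rfl
  have hβdef : β = (stmt7br : ℂ) := rfl
  have hβ2 : β ^ 2 = α ^ 3 - α := by
    rw [hαdef, hβdef]; exact_mod_cast stmt7_hbr2
  have hHc : 24 * α ^ 2 - 24 * α * β ^ 2 + 8 = 0 := by
    rw [hαdef, hβdef]; exact_mod_cast stmt7_hH
  have hαne : α ≠ 0 := by
    rw [hαdef]; exact_mod_cast stmt7_harpos.ne'
  have hβne : β ≠ 0 := by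
    rw [hβdef]; exact_mod_cast stmt7_hbrpos.ne'
  constructor
  · intro j k h
    fin_cases j <;> fin_cases k <;>
      first
      | rfl
      | (exfalso
         simp [P, Projectivization.mk_eq_mk_iff] at h
         all_goals
           (obtain ⟨a, ha⟩ := h
            obtain ⟨h0, h1, h2⟩ := ha
            simp only [Matrix.cons_val_zero, Matrix.cons_val_one, Matrix.head_cons,
              Matrix.cons_val_two, Matrix.tail_cons, Pi.smul_apply, Units.smul_def,
              smul_eq_mul, mul_one, mul_zero] at h0 h1 h2
            first
            | exact zero_ne_one h2
            | (rw [h2] at h0 h1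
               first
               | exact one_ne_zero (by linear_combination -h1)
               | exact hαne (by linear_combination h0 / 2)
               | exact hαne (by linear_combination -h0 / 2)
               | exact hβne (by linear_combination h1 / 2)
               | exact hβne (by linear_combination -h1 / 2)
               | exact hβne (by linear_combination (I/2) * h1 + β * I_sq)
               | exact hβne (by linear_combination (-I/2) * h1 + β * I_sq))))
  · intro k
    fin_cases k <;>
      simp only [P, Fin.isValue, Matrix.cons_val_zero, Matrix.cons_val_one, Matrix.head_cons,
        Matrix.cons_val_two, Matrix.tail_cons, Matrix.cons_val_three, Matrix.cons_val_four,
        Matrix.cons_val', Matrix.empty_val', Matrix.cons_val_fin_one]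
    · exact stmt7_key α _ _ (by simp [Fval]) (by simp [Hval]) (by simp)
    · refine stmt7_key α _ _ ?_ ?_ ?_ <;>
        simp only [Fval, Hval, Matrix.cons_val_zero, Matrix.cons_val_one, Matrix.head_cons,
          Matrix.cons_val_two, Matrix.tail_cons]
      · linear_combination hβ2 - β^2 * I_sq
      · linear_combination hHc + 24*α*β^2 * I_sq
      · ring
    · refine stmt7_key α _ _ ?_ ?_ ?_ <;>
        simp only [Fval, Hval, Matrix.cons_val_zero, Matrix.cons_val_one, Matrix.head_cons,
          Matrix.cons_val_two, Matrix.tail_cons]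
      · linear_combination hβ2 - β^2 * I_sq
      · linear_combination hHc + 24*α*β^2 * I_sq
      · ring
    · refine stmt7_key α _ _ ?_ ?_ ?_ <;>
        simp only [Fval, Hval, Matrix.cons_val_zero, Matrix.cons_val_one, Matrix.head_cons,
          Matrix.cons_val_two, Matrix.tail_cons]
      · linear_combination -hβ2
      · linear_combination hHc
      · ring
    · refine stmt7_key α _ _ ?_ ?_ ?_ <;>
        simp only [Fval, Hval, Matrix.cons_val_zero, Matrix.cons_val_one, Matrix.head_cons,
          Matrix.cons_val_two, Matrix.tail_cons]
      · linear_combination -hβ2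
      · linear_combination hHc
      · ring
end

section
/- Let α = √(1 + 2√3/3) and β = √(α³ − α) be positive real numbers, regarded as complex. The set of points of ℙ²(ℂ) lying simultaneously on the cubic F = X³ − XZ² − Y²Z = 0 and on the conic Q = X² − α²Z² = 0 is exactly the five-element set { [0:1:0], [−α:iβ:1], [−α:−iβ:1], [α:β:1], [α:−β:1] }; in particular the conic Q (which passes through the five tangency points of the curve C^{[5,6]}) meets the cubic C in exactly 5 points. (This is the first half of the paper's Zariski-like Proposition: #(𝒵^{[5,6]} ∩ C) = 5.) -/
open Complex

lemma cond_scale (c : ℂ) (v : Fin 3 → ℂ) (hv : v ≠ 0) :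
    (Fval (Projectivization.mk ℂ v hv).rep = 0 ∧
      (Projectivization.mk ℂ v hv).rep 0 ^ 2 - c ^ 2 * (Projectivization.mk ℂ v hv).rep 2 ^ 2 = 0)
    ↔ (Fval v = 0 ∧ v 0 ^ 2 - c ^ 2 * v 2 ^ 2 = 0) := by
  obtain ⟨a, ha⟩ := Projectivization.exists_smul_eq_mk_rep ℂ v hv
  rw [← ha]
  have h3 : Fval ((a : ℂˣ) • v) = (a : ℂ) ^ 3 * Fval v := by
    simp [Fval, Units.smul_def, Pi.smul_apply, smul_eq_mul]; ring
  have h2 : ((a : ℂˣ) • v) 0 ^ 2 - c ^ 2 * ((a : ℂˣ) • v) 2 ^ 2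
      = (a : ℂ) ^ 2 * (v 0 ^ 2 - c ^ 2 * v 2 ^ 2) := by
    simp [Units.smul_def, Pi.smul_apply, smul_eq_mul]; ring
  rw [h3, h2]
  have hane : (a : ℂ) ≠ 0 := a.ne_zero
  constructor
  · rintro ⟨u1, u2⟩
    exact ⟨(mul_eq_zero.1 u1).resolve_left (pow_ne_zero _ hane),
      (mul_eq_zero.1 u2).resolve_left (pow_ne_zero _ hane)⟩
  · rintro ⟨u1, u2⟩
    exact ⟨by rw [u1, mul_zero], by rw [u2, mul_zero]⟩

lemma alpha_facts :
    let aR : ℝ := Real.sqrt (1 + 2 * Real.sqrt 3 / 3)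
    let bR : ℝ := Real.sqrt (aR ^ 3 - aR)
    aR ≠ 0 ∧ bR ≠ 0 ∧ bR ^ 2 = aR ^ 3 - aR := by
  intro aR bR
  have hs3 : (0:ℝ) < Real.sqrt 3 := Real.sqrt_pos.2 (by norm_num)
  have hbase : (1:ℝ) ≤ 1 + 2 * Real.sqrt 3 / 3 := by nlinarith
  have ha1 : 1 ≤ aR := by
    rw [show (1:ℝ) = Real.sqrt 1 by simp]
    exact Real.sqrt_le_sqrt hbase
  have ha2 : aR ^ 2 = 1 + 2 * Real.sqrt 3 / 3 :=
    Real.sq_sqrt (by linarith)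
  have hpos : 0 < aR ^ 3 - aR := by nlinarith
  exact ⟨by positivity, Real.sqrt_ne_zero'.2 hpos, Real.sq_sqrt hpos.le⟩

lemma mk_vec_eq (w u : Fin 3 → ℂ) (hu : u ≠ 0) (hw : w ≠ 0) (k : ℂ) (hk : k ≠ 0)
    (e0 : k * u 0 = w 0) (e1 : k * u 1 = w 1) (e2 : k * u 2 = w 2) :
    Projectivization.mk ℂ w hw = Projectivization.mk ℂ u hu := by
  rw [Projectivization.mk_eq_mk_iff]
  refine ⟨Units.mk0 k hk, funext fun i => ?_⟩
  fin_cases i <;> simpa [Units.smul_def]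

lemma mk_coords_eq (w u : Fin 3 → ℂ) (hw : w ≠ 0) (hu : u ≠ 0)
    (hw2 : w 2 = 1) (hu2 : u 2 = 1)
    (h : Projectivization.mk ℂ w hw = Projectivization.mk ℂ u hu) :
    w 0 = u 0 ∧ w 1 = u 1 := by
  rw [Projectivization.mk_eq_mk_iff] at h
  obtain ⟨a, ha⟩ := h
  have h2 := congrFun ha 2
  have h1 := congrFun ha 1
  have h0 := congrFun ha 0
  simp only [Pi.smul_apply, Units.smul_def, smul_eq_mul, hw2, hu2, mul_one] at h2 h1 h0
  rw [h2, one_mul] at h1 h0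
  exact ⟨h0.symm, h1.symm⟩

lemma forward_lemma (c d : ℂ) (hd2 : d ^ 2 = c ^ 3 - c)
    (v : Fin 3 → ℂ) (hv : v ≠ 0)
    (hA : (![0, 1, 0] : Fin 3 → ℂ) ≠ 0) (hB : (![-c, I * d, 1] : Fin 3 → ℂ) ≠ 0)
    (hC : (![-c, -(I * d), 1] : Fin 3 → ℂ) ≠ 0) (hD : (![c, d, 1] : Fin 3 → ℂ) ≠ 0)
    (hE : (![c, -d, 1] : Fin 3 → ℂ) ≠ 0)
    (h1 : Fval v = 0) (h2 : v 0 ^ 2 - c ^ 2 * v 2 ^ 2 = 0) :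
    Projectivization.mk ℂ v hv = Projectivization.mk ℂ _ hA ∨
    Projectivization.mk ℂ v hv = Projectivization.mk ℂ _ hB ∨
    Projectivization.mk ℂ v hv = Projectivization.mk ℂ _ hC ∨
    Projectivization.mk ℂ v hv = Projectivization.mk ℂ _ hD ∨
    Projectivization.mk ℂ v hv = Projectivization.mk ℂ _ hE := by
  have hI : I ^ 2 = -1 := Complex.I_sq
  by_cases hz : v 2 = 0
  · have h0 : v 0 = 0 := by
      have hsq : v 0 ^ 2 = 0 := by rw [hz] at h2; linear_combination h2
      exact pow_eq_zero_iff (by norm_num) |>.1 hsq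
    have h1ne : v 1 ≠ 0 := by
      intro hc
      apply hv
      funext i; fin_cases i <;> simp [h0, hz, hc]
    exact Or.inl (mk_vec_eq v _ hA hv (v 1) h1ne (by simp [h0]) (by simp) (by simp [hz]))
  · have hfac : (v 0 - c * v 2) * (v 0 + c * v 2) = 0 := by linear_combination h2
    rcases mul_eq_zero.1 hfac with hc | hc
    · have h0 : v 0 = c * v 2 := by linear_combination hc
      have hy : (v 1 - d * v 2) * (v 1 + d * v 2) = 0 := by
        have h1' := h1
        rw [Fval, h0] at h1'
        have hfac2 : v 2 * ((c ^ 3 - c) * v 2 ^ 2 - v 1 ^ 2) = 0 := by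
          linear_combination h1'
        have h3 := (mul_eq_zero.1 hfac2).resolve_left hz
        linear_combination -h3 - v 2 ^ 2 * hd2
      rcases mul_eq_zero.1 hy with hy' | hy'
      · refine Or.inr (Or.inr (Or.inr (Or.inl
          (mk_vec_eq v _ hD hv (v 2) hz ?_ ?_ ?_)))) <;> simp
        · linear_combination -h0
        · linear_combination -hy'
      · refine Or.inr (Or.inr (Or.inr (Or.inr
          (mk_vec_eq v _ hE hv (v 2) hz ?_ ?_ ?_)))) <;> simp
        · linear_combination -h0
        · linear_combination -hy'
    · have h0 : v 0 = -c * v 2 := by linear_combination hc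
      have hy : (v 1 - I * d * v 2) * (v 1 + I * d * v 2) = 0 := by
        have h1' := h1
        rw [Fval, h0] at h1'
        have hfac2 : v 2 * ((-c ^ 3 + c) * v 2 ^ 2 - v 1 ^ 2) = 0 := by
          linear_combination h1'
        have h3 := (mul_eq_zero.1 hfac2).resolve_left hz
        linear_combination -h3 + v 2 ^ 2 * hd2 - d ^ 2 * v 2 ^ 2 * hI
      rcases mul_eq_zero.1 hy with hy' | hy'
      · refine Or.inr (Or.inl (mk_vec_eq v _ hB hv (v 2) hz ?_ ?_ ?_)) <;> simp
        · linear_combination -h0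
        · linear_combination -hy'
      · refine Or.inr (Or.inr (Or.inl (mk_vec_eq v _ hC hv (v 2) hz ?_ ?_ ?_))) <;> simp
        · linear_combination -h0
        · linear_combination -hy'

/-- The intersection in `ℙ²(ℂ)` of the cubic `F = X³ - XZ² - Y²Z = 0` with the conic
`𝒵^{[5,6]} : X² - α²Z² = 0` through the five tangency points of `C^{[5,6]}` is exactly
the five-element set `{[0:1:0], [-α:iβ:1], [-α:-iβ:1], [α:β:1], [α:-β:1]}`;
in particular it has exactly `5` points. -/
theorem stmt_8 :
    let α : ℂ := (Real.sqrt (1 + 2 * Real.sqrt 3 / 3) : ℝ)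
    let β : ℂ := (Real.sqrt (Real.sqrt (1 + 2 * Real.sqrt 3 / 3) ^ 3 -
      Real.sqrt (1 + 2 * Real.sqrt 3 / 3)) : ℝ)
    let S : Set (Projectivization ℂ (Fin 3 → ℂ)) :=
      {p | Fval p.rep = 0 ∧ p.rep 0 ^ 2 - α ^ 2 * p.rep 2 ^ 2 = 0}
    S = {Projectivization.mk ℂ (![0, 1, 0] : Fin 3 → ℂ)
          (fun h => by simpa using congrFun h 1),
        Projectivization.mk ℂ (![-α, I * β, 1] : Fin 3 → ℂ)
          (fun h => by simpa using congrFun h 2),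
        Projectivization.mk ℂ (![-α, -(I * β), 1] : Fin 3 → ℂ)
          (fun h => by simpa using congrFun h 2),
        Projectivization.mk ℂ (![α, β, 1] : Fin 3 → ℂ)
          (fun h => by simpa using congrFun h 2),
        Projectivization.mk ℂ (![α, -β, 1] : Fin 3 → ℂ)
          (fun h => by simpa using congrFun h 2)} ∧
      S.ncard = 5 := by
  intro α β S
  obtain ⟨haR, hbR, hbR2⟩ := alpha_facts
  have hα0 : α ≠ 0 := by simpa [α] using haR
  have hβ0 : β ≠ 0 := by simpa [β] using hbR
  have hβ2 : β ^ 2 = α ^ 3 - α := by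
    have h1 : β ^ 2 = ((Real.sqrt (Real.sqrt (1 + 2 * Real.sqrt 3 / 3) ^ 3 -
        Real.sqrt (1 + 2 * Real.sqrt 3 / 3)) ^ 2 : ℝ) : ℂ) := by
      push_cast
      rfl
    rw [h1, hbR2]
    show ((Real.sqrt (1 + 2 * Real.sqrt 3 / 3) ^ 3 - Real.sqrt (1 + 2 * Real.sqrt 3 / 3) : ℝ) : ℂ)
      = ((Real.sqrt (1 + 2 * Real.sqrt 3 / 3) : ℝ) : ℂ) ^ 3
        - ((Real.sqrt (1 + 2 * Real.sqrt 3 / 3) : ℝ) : ℂ)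
    push_cast
    ring
  have hI : I ^ 2 = -1 := Complex.I_sq
  have hA : (![0, 1, 0] : Fin 3 → ℂ) ≠ 0 := fun h => by simpa using congrFun h 1
  have hB : (![-α, I * β, 1] : Fin 3 → ℂ) ≠ 0 := fun h => by simpa using congrFun h 2
  have hC : (![-α, -(I * β), 1] : Fin 3 → ℂ) ≠ 0 := fun h => by simpa using congrFun h 2
  have hD : (![α, β, 1] : Fin 3 → ℂ) ≠ 0 := fun h => by simpa using congrFun h 2
  have hE : (![α, -β, 1] : Fin 3 → ℂ) ≠ 0 := fun h => by simpa using congrFun h 2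
  have hSeq : S = {Projectivization.mk ℂ _ hA, Projectivization.mk ℂ _ hB,
      Projectivization.mk ℂ _ hC, Projectivization.mk ℂ _ hD, Projectivization.mk ℂ _ hE} := by
    ext p
    simp only [S, Set.mem_setOf_eq, Set.mem_insert_iff, Set.mem_singleton_iff]
    constructor
    · rintro ⟨h1, h2⟩
      have := forward_lemma α β hβ2 p.rep p.rep_nonzero hA hB hC hD hE h1 h2
      rwa [Projectivization.mk_rep] at this
    · intro hp
      rcases hp with rfl | rfl | rfl | rfl | rfl
      · exact (cond_scale α _ _).2 ⟨by simp [Fval], by simp⟩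
      · exact (cond_scale α _ _).2 ⟨by simp [Fval]; linear_combination hβ2 - β ^ 2 * hI,
          by simp⟩
      · exact (cond_scale α _ _).2 ⟨by simp [Fval]; linear_combination hβ2 - β ^ 2 * hI,
          by simp⟩
      · exact (cond_scale α _ _).2 ⟨by simp [Fval]; linear_combination -hβ2, by simp⟩
      · exact (cond_scale α _ _).2 ⟨by simp [Fval]; linear_combination -hβ2, by simp⟩
  refine ⟨hSeq, ?_⟩
  have hne0 : ∀ (w : Fin 3 → ℂ) (hw : w ≠ 0), w 2 = 1 →
      Projectivization.mk ℂ _ hA ≠ Projectivization.mk ℂ w hw := by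
    intro w hw hw2 h
    rw [Projectivization.mk_eq_mk_iff] at h
    obtain ⟨a, ha⟩ := h
    have h2 := congrFun ha 2
    simp only [Pi.smul_apply, Units.smul_def, smul_eq_mul, hw2, mul_one] at h2
    exact a.ne_zero (by simpa using h2)
  have hIβ : I * β ≠ 0 := mul_ne_zero Complex.I_ne_zero hβ0
  have h01 := hne0 _ hB (by simp)
  have h02 := hne0 _ hC (by simp)
  have h03 := hne0 _ hD (by simp)
  have h04 := hne0 _ hE (by simp)
  have h12 : Projectivization.mk ℂ _ hB ≠ Projectivization.mk ℂ _ hC := by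
    intro h
    have := (mk_coords_eq _ _ hB hC (by simp) (by simp) h).2
    simp only [Matrix.cons_val_one, Matrix.head_cons, Matrix.cons_val_zero] at this
    exact hIβ (by linear_combination this / 2)
  have h13 : Projectivization.mk ℂ _ hB ≠ Projectivization.mk ℂ _ hD := by
    intro h
    have := (mk_coords_eq _ _ hB hD (by simp) (by simp) h).1
    simp only [Matrix.cons_val_zero] at this
    exact hα0 (by linear_combination -this / 2)
  have h14 : Projectivization.mk ℂ _ hB ≠ Projectivization.mk ℂ _ hE := by
    intro h
    have := (mk_coords_eq _ _ hB hE (by simp) (by simp) h).1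
    simp only [Matrix.cons_val_zero] at this
    exact hα0 (by linear_combination -this / 2)
  have h23 : Projectivization.mk ℂ _ hC ≠ Projectivization.mk ℂ _ hD := by
    intro h
    have := (mk_coords_eq _ _ hC hD (by simp) (by simp) h).1
    simp only [Matrix.cons_val_zero] at this
    exact hα0 (by linear_combination -this / 2)
  have h24 : Projectivization.mk ℂ _ hC ≠ Projectivization.mk ℂ _ hE := by
    intro h
    have := (mk_coords_eq _ _ hC hE (by simp) (by simp) h).1
    simp only [Matrix.cons_val_zero] at this
    exact hα0 (by linear_combination -this / 2)
  have h34 : Projectivization.mk ℂ _ hD ≠ Projectivization.mk ℂ _ hE := by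
    intro h
    have := (mk_coords_eq _ _ hD hE (by simp) (by simp) h).2
    simp only [Matrix.cons_val_one, Matrix.head_cons, Matrix.cons_val_zero] at this
    exact hβ0 (by linear_combination this / 2)
  rw [hSeq]
  rw [Set.ncard_insert_of_notMem (by simp [h01, h02, h03, h04]),
    Set.ncard_insert_of_notMem (by simp [h12, h13, h14]),
    Set.ncard_insert_of_notMem (by simp [h23, h24]),
    Set.ncard_pair h34]
end

section
/- Let α = √(1 + 2√3/3), β = √(α³ − α), c = √(2√3/3 − 1) and t = √(c·√3/3) be positive real numbers, regarded as complex. The set of points of ℙ²(ℂ) lying simultaneously on the cubic F = X³ − XZ² − Y²Z = 0 and on the conic Q′ = (X + αZ)·(tX + cY − tcZ) = 0 has exactly 6 elements, namely { [0:1:0], [−α:iβ:1], [−α:−iβ:1], [α:−β:1], [−ic : t(1+i) : 1], [ic : t(1−i) : 1] }. (This is the second half of the paper's Zariski-like Proposition: the conic through the five tangency points of the curve C^{[1,3]} meets the cubic C in exactly 6 points, the extra point being the sixth inflexion point lying on one of the two lines composing the conic.) -/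
open Complex

namespace Stmt9Aux

lemma real_hac (s3 a c : ℝ) (hs3 : s3^2 = 3) (hs3p : 0 < s3)
    (ha2 : a^2 = 1 + 2*s3/3) (ha0 : 0 < a)
    (hc2 : c^2 = 2*s3/3 - 1) (hc0 : 0 < c) : a*c = s3/3 := by
  have h1 : (a*c)^2 = (s3/3)^2 := by
    rw [mul_pow, ha2, hc2]; linear_combination (1/3)*hs3
  have h2 := congrArg Real.sqrt h1
  rwa [Real.sqrt_sq (by positivity), Real.sqrt_sq (by positivity)] at h2

lemma real_htac (s3 a b c t : ℝ) (hs3 : s3^2 = 3) (hs3p : 0 < s3)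
    (ha2 : a^2 = 1 + 2*s3/3) (ha0 : 0 < a)
    (hc2 : c^2 = 2*s3/3 - 1) (hc0 : 0 < c)
    (hb2 : b^2 = a^3 - a) (hb0 : 0 < b)
    (ht2 : t^2 = c*s3/3) (ht0 : 0 < t) : t*(a-c) = c*b := by
  have hac := real_hac s3 a c hs3 hs3p ha2 ha0 hc2 hc0
  have hca : c < a := by nlinarith
  have h1 : (t*(a-c))^2 = (c*b)^2 := by
    have e1 : (a-c)^2 = a^2 - 1 := by nlinarith
    have ht2' : t^2 = a*c^2 := by rw [ht2]; linear_combination (-c)*hac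
    calc (t*(a-c))^2 = t^2*(a-c)^2 := by ring
      _ = a*c^2*(a^2-1) := by rw [ht2', e1]
      _ = c^2*(a^3-a) := by ring
      _ = (c*b)^2 := by rw [mul_pow, hb2]
  have h2 := congrArg Real.sqrt h1
  rwa [Real.sqrt_sq (by nlinarith), Real.sqrt_sq (by positivity)] at h2

def Cond (α c t : ℂ) (v : Fin 3 → ℂ) : Prop :=
  Fval v = 0 ∧ (v 0 + α * v 2) * (t * v 0 + c * v 1 - t * c * v 2) = 0

lemma cond_smul (α c t k : ℂ) (hk : k ≠ 0) (v : Fin 3 → ℂ) :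
    Cond α c t (k • v) ↔ Cond α c t v := by
  have e1 : Fval (k • v) = k^3 * Fval v := by
    simp only [Fval, Pi.smul_apply, smul_eq_mul]; ring
  have e2 : ((k•v) 0 + α * (k•v) 2) * (t * (k•v) 0 + c * (k•v) 1 - t * c * (k•v) 2)
      = k^2 * ((v 0 + α * v 2) * (t * v 0 + c * v 1 - t * c * v 2)) := by
    simp only [Pi.smul_apply, smul_eq_mul]; ring
  unfold Cond
  rw [e1, e2, mul_eq_zero, mul_eq_zero]
  have h3 : k^3 ≠ 0 := pow_ne_zero _ hk
  have h2 : k^2 ≠ 0 := pow_ne_zero _ hk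
  tauto

lemma cond_of_mk_eq {α c t : ℂ} {v w : Fin 3 → ℂ} (hv : v ≠ 0) (hw : w ≠ 0)
    (h : Projectivization.mk ℂ v hv = Projectivization.mk ℂ w hw) :
    Cond α c t v ↔ Cond α c t w := by
  obtain ⟨a, ha⟩ := (Projectivization.mk_eq_mk_iff ℂ v w hv hw).1 h
  rw [← ha, Units.smul_def, cond_smul _ _ _ _ a.ne_zero]

lemma cond_rep {α c t : ℂ} (v : Fin 3 → ℂ) (hv : v ≠ 0) :
    Cond α c t (Projectivization.mk ℂ v hv).rep ↔ Cond α c t v :=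
  cond_of_mk_eq _ hv (Projectivization.mk_rep _)

lemma vec_zero_iff (v : Fin 3 → ℂ) : v = 0 ↔ v 0 = 0 ∧ v 1 = 0 ∧ v 2 = 0 := by
  constructor
  · rintro rfl; simp
  · rintro ⟨h0, h1, h2⟩; funext i; fin_cases i <;> assumption

lemma smul_vec_eq (k a b c' : ℂ) (v : Fin 3 → ℂ)
    (h0 : k * a = v 0) (h1 : k * b = v 1) (h2 : k * c' = v 2) :
    k • (![a, b, c'] : Fin 3 → ℂ) = v := by
  funext i; fin_cases i <;> simpa [Pi.smul_apply]

lemma classify {α β c t : ℂ} (hβ2 : β^2 = α^3 - α) (hT2 : t^2 = α*c^2)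
    (h2ac : c^2 + 1 = 2*α*c) (hTac : t*(α-c) = c*β) (hc : c ≠ 0)
    (v : Fin 3 → ℂ) (hv : v ≠ 0) (h : Cond α c t v) :
    (∃ k : ℂ, k • (![0, 1, 0] : Fin 3 → ℂ) = v) ∨
    (∃ k : ℂ, k • (![-α, I * β, 1] : Fin 3 → ℂ) = v) ∨
    (∃ k : ℂ, k • (![-α, -(I * β), 1] : Fin 3 → ℂ) = v) ∨
    (∃ k : ℂ, k • (![α, -β, 1] : Fin 3 → ℂ) = v) ∨
    (∃ k : ℂ, k • (![-(I * c), t * (1 + I), 1] : Fin 3 → ℂ) = v) ∨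
    (∃ k : ℂ, k • (![I * c, t * (1 - I), 1] : Fin 3 → ℂ) = v) := by
  obtain ⟨hF, hQ⟩ := h
  rw [Fval] at hF
  rcases mul_eq_zero.1 hQ with h1 | h2
  · have hfac : v 2 * ((v 1 - I*β*v 2) * (v 1 + I*β*v 2)) = 0 := by
      linear_combination (-1 : ℂ)*hF + (v 0^2 - α*(v 0)*(v 2) + α^2*(v 2)^2 - (v 2)^2)*h1
        + (v 2)^3*hβ2 - β^2*(v 2)^3*Complex.I_sq
    rcases mul_eq_zero.1 hfac with hz | hyy
    · left
      have hx : v 0 = 0 := by rw [hz] at h1; simpa using h1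
      exact ⟨v 1, smul_vec_eq _ _ _ _ v (by rw [hx]; ring) (by ring) (by rw [hz]; ring)⟩
    · rcases mul_eq_zero.1 hyy with hy | hy
      · right; left
        exact ⟨v 2, smul_vec_eq _ _ _ _ v (by linear_combination -h1) (by linear_combination -hy)
          (by ring)⟩
      · right; right; left
        exact ⟨v 2, smul_vec_eq _ _ _ _ v (by linear_combination -h1) (by linear_combination -hy)
          (by ring)⟩
  · have hz : v 2 ≠ 0 := by
      intro hz
      have hx : v 0 = 0 := by
        have : v 0 ^ 3 = 0 := by linear_combination hF + (v 0 * v 2 + v 1^2)*hz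
        exact pow_eq_zero_iff (by norm_num) |>.1 this
      have hy : v 1 = 0 := by
        have : c * v 1 = 0 := by linear_combination h2 - t*hx + t*c*hz
        exact (mul_eq_zero.1 this).resolve_left hc
      exact hv ((vec_zero_iff v).2 ⟨hx, hy, hz⟩)
    have hcube : c^2 * ((v 0 - α*v 2) * ((v 0 - I*c*v 2) * (v 0 + I*c*v 2))) = 0 := by
      linear_combination c^2*hF + (v 2)*(c*(v 1) + t*c*(v 2) - t*(v 0))*h2
        + (v 2)*(c*(v 2) - v 0)^2*hT2 + c^2*(v 0)*(v 2)^2*h2ac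
        - (v 0 - α*(v 2))*c^4*(v 2)^2*Complex.I_sq
    have hcube' := (mul_eq_zero.1 hcube).resolve_left (pow_ne_zero 2 hc)
    rcases mul_eq_zero.1 hcube' with hx | hxx
    · right; right; right; left
      refine ⟨v 2, smul_vec_eq _ _ _ _ v (by linear_combination -hx) ?_ (by ring)⟩
      have hcy : c * (v 2 * (-β)) = c * v 1 := by
        linear_combination (v 2)*hTac - h2 + t*hx
      exact mul_left_cancel₀ hc hcy
    · rcases mul_eq_zero.1 hxx with hx | hx
      · right; right; right; right; right
        refine ⟨v 2, smul_vec_eq _ _ _ _ v (by linear_combination -hx) ?_ (by ring)⟩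
        have hcy : c * (v 2 * (t*(1-I))) = c * v 1 := by
          linear_combination -h2 + t*hx
        exact mul_left_cancel₀ hc hcy
      · right; right; right; right; left
        refine ⟨v 2, smul_vec_eq _ _ _ _ v (by linear_combination -hx) ?_ (by ring)⟩
        have hcy : c * (v 2 * (t*(1+I))) = c * v 1 := by
          linear_combination -h2 + t*hx
        exact mul_left_cancel₀ hc hcy

lemma cond_p1 (α c t : ℂ) : Cond α c t ![0, 1, 0] := by
  constructor <;> simp [Fval]

lemma cond_p2 {α β c t : ℂ} (hβ2 : β^2 = α^3 - α) : Cond α c t ![-α, I * β, 1] := by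
  refine ⟨?_, ?_⟩ <;> simp only [Fval, Matrix.cons_val_zero, Matrix.cons_val_one,
    Matrix.head_cons, Matrix.cons_val_two, Matrix.tail_cons]
  · linear_combination hβ2 - β^2*Complex.I_sq
  · ring

lemma cond_p3 {α β c t : ℂ} (hβ2 : β^2 = α^3 - α) : Cond α c t ![-α, -(I * β), 1] := by
  refine ⟨?_, ?_⟩ <;> simp only [Fval, Matrix.cons_val_zero, Matrix.cons_val_one,
    Matrix.head_cons, Matrix.cons_val_two, Matrix.tail_cons]
  · linear_combination hβ2 - β^2*Complex.I_sq
  · ring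

lemma cond_p4 {α β c t : ℂ} (hβ2 : β^2 = α^3 - α) (hTac : t*(α-c) = c*β) :
    Cond α c t ![α, -β, 1] := by
  refine ⟨?_, ?_⟩ <;> simp only [Fval, Matrix.cons_val_zero, Matrix.cons_val_one,
    Matrix.head_cons, Matrix.cons_val_two, Matrix.tail_cons]
  · linear_combination -hβ2
  · linear_combination 2*α*hTac

lemma cond_p5 {α c t : ℂ} (hT2 : t^2 = α*c^2) (h2ac : c^2 + 1 = 2*α*c) :
    Cond α c t ![-(I * c), t * (1 + I), 1] := by
  refine ⟨?_, ?_⟩ <;> simp only [Fval, Matrix.cons_val_zero, Matrix.cons_val_one,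
    Matrix.head_cons, Matrix.cons_val_two, Matrix.tail_cons]
  · linear_combination I*c*h2ac - 2*I*hT2 + (-t^2 - c^3*I)*Complex.I_sq
  · ring

lemma cond_p6 {α c t : ℂ} (hT2 : t^2 = α*c^2) (h2ac : c^2 + 1 = 2*α*c) :
    Cond α c t ![I * c, t * (1 - I), 1] := by
  refine ⟨?_, ?_⟩ <;> simp only [Fval, Matrix.cons_val_zero, Matrix.cons_val_one,
    Matrix.head_cons, Matrix.cons_val_two, Matrix.tail_cons]
  · linear_combination -(I*c)*h2ac + 2*I*hT2 + (-t^2 + c^3*I)*Complex.I_sq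
  · ring

lemma mk_ne_mk {v w : Fin 3 → ℂ} (hv : v ≠ 0) (hw : w ≠ 0)
    (h : ∀ k : ℂ, k • w ≠ v) :
    Projectivization.mk ℂ v hv ≠ Projectivization.mk ℂ w hw := by
  intro he
  obtain ⟨k, hk⟩ := (Projectivization.mk_eq_mk_iff' ℂ v w hv hw).1 he
  exact h k hk

end Stmt9Aux
namespace Stmt9Aux

lemma ne_helper1 (a2 b2 : ℂ) (pr : (![0,1,0] : Fin 3 → ℂ) ≠ 0)
    (hw : (![a2, b2, 1] : Fin 3 → ℂ) ≠ 0) :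
    Projectivization.mk ℂ ![0,1,0] pr ≠ Projectivization.mk ℂ ![a2, b2, 1] hw := by
  apply mk_ne_mk
  intro k hk
  have e2 := congrFun hk 2
  have e1 := congrFun hk 1
  simp only [Pi.smul_apply, smul_eq_mul, Matrix.cons_val_two, Matrix.tail_cons,
    Matrix.head_cons, Matrix.cons_val_one, mul_one] at e2 e1
  rw [e2, zero_mul] at e1
  exact zero_ne_one e1

lemma ne_helper2 (a1 b1 a2 b2 : ℂ) (hv : (![a1, b1, 1] : Fin 3 → ℂ) ≠ 0)
    (hw : (![a2, b2, 1] : Fin 3 → ℂ) ≠ 0) (hne : a2 ≠ a1) :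
    Projectivization.mk ℂ ![a1, b1, 1] hv ≠ Projectivization.mk ℂ ![a2, b2, 1] hw := by
  apply mk_ne_mk
  intro k hk
  have e2 := congrFun hk 2
  have e0 := congrFun hk 0
  simp only [Pi.smul_apply, smul_eq_mul, Matrix.cons_val_two, Matrix.tail_cons,
    Matrix.head_cons, Matrix.cons_val_zero, mul_one] at e2 e0
  rw [e2, one_mul] at e0
  exact hne e0

lemma ne_helper2' (a1 b1 a2 b2 : ℂ) (hv : (![a1, b1, 1] : Fin 3 → ℂ) ≠ 0)
    (hw : (![a2, b2, 1] : Fin 3 → ℂ) ≠ 0) (hne : b2 ≠ b1) :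
    Projectivization.mk ℂ ![a1, b1, 1] hv ≠ Projectivization.mk ℂ ![a2, b2, 1] hw := by
  apply mk_ne_mk
  intro k hk
  have e2 := congrFun hk 2
  have e1 := congrFun hk 1
  simp only [Pi.smul_apply, smul_eq_mul, Matrix.cons_val_two, Matrix.tail_cons,
    Matrix.head_cons, Matrix.cons_val_one, mul_one] at e2 e1
  rw [e2, one_mul] at e1
  exact hne e1

end Stmt9Aux

/-- The intersection in `ℙ²(ℂ)` of the cubic `F = X³ - XZ² - Y²Z = 0` with the conic
`Q' = (X + αZ)(tX + cY - tcZ) = 0` through the five tangency points of `C^{[1,3]}` has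
exactly `6` elements, namely `{[0:1:0], [-α:iβ:1], [-α:-iβ:1], [α:-β:1],
[-ic : t(1+i) : 1], [ic : t(1-i) : 1]}`. -/
theorem stmt_9 :
    let α : ℂ := (Real.sqrt (1 + 2 * Real.sqrt 3 / 3) : ℝ)
    let β : ℂ := (Real.sqrt (Real.sqrt (1 + 2 * Real.sqrt 3 / 3) ^ 3 -
      Real.sqrt (1 + 2 * Real.sqrt 3 / 3)) : ℝ)
    let c : ℂ := (Real.sqrt (2 * Real.sqrt 3 / 3 - 1) : ℝ)
    let t : ℂ := (Real.sqrt (Real.sqrt (2 * Real.sqrt 3 / 3 - 1) * Real.sqrt 3 / 3) : ℝ)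
    let S : Set (Projectivization ℂ (Fin 3 → ℂ)) :=
      {p | Fval p.rep = 0 ∧
        (p.rep 0 + α * p.rep 2) * (t * p.rep 0 + c * p.rep 1 - t * c * p.rep 2) = 0}
    S = {Projectivization.mk ℂ (![0, 1, 0] : Fin 3 → ℂ)
          (fun h => by simpa using congrFun h 1),
        Projectivization.mk ℂ (![-α, I * β, 1] : Fin 3 → ℂ)
          (fun h => by simpa using congrFun h 2),
        Projectivization.mk ℂ (![-α, -(I * β), 1] : Fin 3 → ℂ)
          (fun h => by simpa using congrFun h 2),
        Projectivization.mk ℂ (![α, -β, 1] : Fin 3 → ℂ)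
          (fun h => by simpa using congrFun h 2),
        Projectivization.mk ℂ (![-(I * c), t * (1 + I), 1] : Fin 3 → ℂ)
          (fun h => by simpa using congrFun h 2),
        Projectivization.mk ℂ (![I * c, t * (1 - I), 1] : Fin 3 → ℂ)
          (fun h => by simpa using congrFun h 2)} ∧
      S.ncard = 6 := by
  intro α β c t S
  -- real facts
  have hs3 : Real.sqrt 3 ^ 2 = 3 := Real.sq_sqrt (by norm_num)
  have hs3p : (0:ℝ) < Real.sqrt 3 := Real.sqrt_pos.2 (by norm_num)
  have h32 : (3:ℝ)/2 < Real.sqrt 3 := by nlinarith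
  have ha2 : Real.sqrt (1 + 2 * Real.sqrt 3 / 3) ^ 2 = 1 + 2 * Real.sqrt 3 / 3 :=
    Real.sq_sqrt (by nlinarith)
  have ha0 : 0 < Real.sqrt (1 + 2 * Real.sqrt 3 / 3) := Real.sqrt_pos.2 (by nlinarith)
  have hc2 : Real.sqrt (2 * Real.sqrt 3 / 3 - 1) ^ 2 = 2 * Real.sqrt 3 / 3 - 1 :=
    Real.sq_sqrt (by nlinarith)
  have hc0 : 0 < Real.sqrt (2 * Real.sqrt 3 / 3 - 1) := Real.sqrt_pos.2 (by nlinarith)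
  have ha1 : 1 < Real.sqrt (1 + 2 * Real.sqrt 3 / 3) := by nlinarith
  have hb2 : Real.sqrt (Real.sqrt (1 + 2 * Real.sqrt 3 / 3) ^ 3 -
      Real.sqrt (1 + 2 * Real.sqrt 3 / 3)) ^ 2
      = Real.sqrt (1 + 2 * Real.sqrt 3 / 3) ^ 3 - Real.sqrt (1 + 2 * Real.sqrt 3 / 3) :=
    Real.sq_sqrt (by nlinarith)
  have hb0 : 0 < Real.sqrt (Real.sqrt (1 + 2 * Real.sqrt 3 / 3) ^ 3 -
      Real.sqrt (1 + 2 * Real.sqrt 3 / 3)) := Real.sqrt_pos.2 (by nlinarith)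
  have ht2 : Real.sqrt (Real.sqrt (2 * Real.sqrt 3 / 3 - 1) * Real.sqrt 3 / 3) ^ 2
      = Real.sqrt (2 * Real.sqrt 3 / 3 - 1) * Real.sqrt 3 / 3 :=
    Real.sq_sqrt (by positivity)
  have ht0 : 0 < Real.sqrt (Real.sqrt (2 * Real.sqrt 3 / 3 - 1) * Real.sqrt 3 / 3) :=
    Real.sqrt_pos.2 (by positivity)
  have hacR := Stmt9Aux.real_hac _ _ _ hs3 hs3p ha2 ha0 hc2 hc0
  have htacR := Stmt9Aux.real_htac _ _ _ _ _ hs3 hs3p ha2 ha0 hc2 hc0 hb2 hb0 ht2 ht0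
  have h2acR : Real.sqrt (2 * Real.sqrt 3 / 3 - 1) ^ 2 + 1
      = 2 * Real.sqrt (1 + 2 * Real.sqrt 3 / 3) * Real.sqrt (2 * Real.sqrt 3 / 3 - 1) := by
    linear_combination hc2 - 2*hacR
  have hT2R : Real.sqrt (Real.sqrt (2 * Real.sqrt 3 / 3 - 1) * Real.sqrt 3 / 3) ^ 2
      = Real.sqrt (1 + 2 * Real.sqrt 3 / 3) * Real.sqrt (2 * Real.sqrt 3 / 3 - 1) ^ 2 := by
    linear_combination ht2 - Real.sqrt (2 * Real.sqrt 3 / 3 - 1)*hacR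
  -- complex facts
  have hβ2 : β^2 = α^3 - α := by unfold β α; exact_mod_cast hb2
  have hT2C : t^2 = α*c^2 := by unfold t α c; exact_mod_cast hT2R
  have h2acC : c^2 + 1 = 2*α*c := by unfold α c; exact_mod_cast h2acR
  have hTacC : t*(α-c) = c*β := by unfold t α c β; exact_mod_cast htacR
  have hcne : c ≠ 0 := by unfold c; exact_mod_cast hc0.ne'
  have hαne : α ≠ 0 := by unfold α; exact_mod_cast ha0.ne'
  have hβne : β ≠ 0 := by unfold β; exact_mod_cast hb0.ne'
  -- distinctness ingredients
  have key1 : I * c ≠ α := by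
    unfold α c
    intro h
    have h2 := congrArg Complex.re h
    simp [Complex.mul_re] at h2
    exact absurd h2.symm ha0.ne'
  have key2 : I * c ≠ -α := by
    unfold α c
    intro h
    have h2 := congrArg Complex.re h
    simp [Complex.mul_re] at h2
    nlinarith [ha0, h2]
  have hIβ : -(I*β) ≠ I*β := by
    intro h
    apply hβne
    have h2 : (2*I)*β = 0 := by linear_combination -h
    rcases mul_eq_zero.1 h2 with h3|h3
    · exact absurd h3 (by simp [Complex.ext_iff])
    · exact h3
  have hIc : I*c ≠ -(I*c) := by
    intro h
    apply hcne
    have h2 : (2*I)*c = 0 := by linear_combination h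
    rcases mul_eq_zero.1 h2 with h3|h3
    · exact absurd h3 (by simp [Complex.ext_iff])
    · exact h3
  have hαα : α ≠ -α := by
    intro h
    apply hαne
    linear_combination (1/2 : ℂ)*h
  -- nonzero proofs
  have n1 : (![0, 1, 0] : Fin 3 → ℂ) ≠ 0 := fun h => by simpa using congrFun h 1
  have n2 : (![-α, I * β, 1] : Fin 3 → ℂ) ≠ 0 := fun h => by simpa using congrFun h 2
  have n3 : (![-α, -(I * β), 1] : Fin 3 → ℂ) ≠ 0 := fun h => by simpa using congrFun h 2
  have n4 : (![α, -β, 1] : Fin 3 → ℂ) ≠ 0 := fun h => by simpa using congrFun h 2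
  have n5 : (![-(I * c), t * (1 + I), 1] : Fin 3 → ℂ) ≠ 0 := fun h => by simpa using congrFun h 2
  have n6 : (![I * c, t * (1 - I), 1] : Fin 3 → ℂ) ≠ 0 := fun h => by simpa using congrFun h 2
  have hmem : ∀ p : Projectivization ℂ (Fin 3 → ℂ), p ∈ S ↔ Stmt9Aux.Cond α c t p.rep :=
    fun _ => Iff.rfl
  have hset : S = {Projectivization.mk ℂ ![0, 1, 0] n1,
      Projectivization.mk ℂ ![-α, I * β, 1] n2,
      Projectivization.mk ℂ ![-α, -(I * β), 1] n3,
      Projectivization.mk ℂ ![α, -β, 1] n4,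
      Projectivization.mk ℂ ![-(I * c), t * (1 + I), 1] n5,
      Projectivization.mk ℂ ![I * c, t * (1 - I), 1] n6} := by
    ext p
    induction p using Projectivization.ind with
    | h v hv =>
    rw [hmem, Stmt9Aux.cond_rep]
    simp only [Set.mem_insert_iff, Set.mem_singleton_iff]
    constructor
    · intro h
      rcases Stmt9Aux.classify hβ2 hT2C h2acC hTacC hcne v hv h with hk|hk|hk|hk|hk|hk
      · exact Or.inl ((Projectivization.mk_eq_mk_iff' ℂ v _ hv n1).2 hk)
      · exact Or.inr (Or.inl ((Projectivization.mk_eq_mk_iff' ℂ v _ hv n2).2 hk))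
      · exact Or.inr (Or.inr (Or.inl ((Projectivization.mk_eq_mk_iff' ℂ v _ hv n3).2 hk)))
      · exact Or.inr (Or.inr (Or.inr (Or.inl
          ((Projectivization.mk_eq_mk_iff' ℂ v _ hv n4).2 hk))))
      · exact Or.inr (Or.inr (Or.inr (Or.inr (Or.inl
          ((Projectivization.mk_eq_mk_iff' ℂ v _ hv n5).2 hk)))))
      · exact Or.inr (Or.inr (Or.inr (Or.inr (Or.inr
          ((Projectivization.mk_eq_mk_iff' ℂ v _ hv n6).2 hk)))))
    · intro h
      rcases h with h|h|h|h|h|h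
      · exact (Stmt9Aux.cond_of_mk_eq hv n1 h).2 (Stmt9Aux.cond_p1 α c t)
      · exact (Stmt9Aux.cond_of_mk_eq hv n2 h).2 (Stmt9Aux.cond_p2 hβ2)
      · exact (Stmt9Aux.cond_of_mk_eq hv n3 h).2 (Stmt9Aux.cond_p3 hβ2)
      · exact (Stmt9Aux.cond_of_mk_eq hv n4 h).2 (Stmt9Aux.cond_p4 hβ2 hTacC)
      · exact (Stmt9Aux.cond_of_mk_eq hv n5 h).2 (Stmt9Aux.cond_p5 hT2C h2acC)
      · exact (Stmt9Aux.cond_of_mk_eq hv n6 h).2 (Stmt9Aux.cond_p6 hT2C h2acC)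
  refine ⟨hset, ?_⟩
  -- pairwise distinctness
  have ne12 := Stmt9Aux.ne_helper1 (-α) (I*β) n1 n2
  have ne13 := Stmt9Aux.ne_helper1 (-α) (-(I*β)) n1 n3
  have ne14 := Stmt9Aux.ne_helper1 α (-β) n1 n4
  have ne15 := Stmt9Aux.ne_helper1 (-(I*c)) (t*(1+I)) n1 n5
  have ne16 := Stmt9Aux.ne_helper1 (I*c) (t*(1-I)) n1 n6
  have ne23 := Stmt9Aux.ne_helper2' (-α) (I*β) (-α) (-(I*β)) n2 n3 hIβ
  have ne24 := Stmt9Aux.ne_helper2 (-α) (I*β) α (-β) n2 n4 hαα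
  have ne25 := Stmt9Aux.ne_helper2 (-α) (I*β) (-(I*c)) (t*(1+I)) n2 n5
    (fun h => key1 (neg_inj.1 h))
  have ne26 := Stmt9Aux.ne_helper2 (-α) (I*β) (I*c) (t*(1-I)) n2 n6 key2
  have ne34 := Stmt9Aux.ne_helper2 (-α) (-(I*β)) α (-β) n3 n4 hαα
  have ne35 := Stmt9Aux.ne_helper2 (-α) (-(I*β)) (-(I*c)) (t*(1+I)) n3 n5
    (fun h => key1 (neg_inj.1 h))
  have ne36 := Stmt9Aux.ne_helper2 (-α) (-(I*β)) (I*c) (t*(1-I)) n3 n6 key2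
  have ne45 := Stmt9Aux.ne_helper2 α (-β) (-(I*c)) (t*(1+I)) n4 n5
    (fun h => key2 (neg_eq_iff_eq_neg.1 h))
  have ne46 := Stmt9Aux.ne_helper2 α (-β) (I*c) (t*(1-I)) n4 n6 key1
  have ne56 := Stmt9Aux.ne_helper2 (-(I*c)) (t*(1+I)) (I*c) (t*(1-I)) n5 n6 hIc
  rw [hset]
  have m1 : Projectivization.mk ℂ ![0, 1, 0] n1 ∉
      ({Projectivization.mk ℂ ![-α, I * β, 1] n2,
        Projectivization.mk ℂ ![-α, -(I * β), 1] n3,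
        Projectivization.mk ℂ ![α, -β, 1] n4,
        Projectivization.mk ℂ ![-(I * c), t * (1 + I), 1] n5,
        Projectivization.mk ℂ ![I * c, t * (1 - I), 1] n6} :
        Set (Projectivization ℂ (Fin 3 → ℂ))) := by
    simp only [Set.mem_insert_iff, Set.mem_singleton_iff]
    push_neg
    exact ⟨ne12, ne13, ne14, ne15, ne16⟩
  have m2 : Projectivization.mk ℂ ![-α, I * β, 1] n2 ∉
      ({Projectivization.mk ℂ ![-α, -(I * β), 1] n3,
        Projectivization.mk ℂ ![α, -β, 1] n4,
        Projectivization.mk ℂ ![-(I * c), t * (1 + I), 1] n5,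
        Projectivization.mk ℂ ![I * c, t * (1 - I), 1] n6} :
        Set (Projectivization ℂ (Fin 3 → ℂ))) := by
    simp only [Set.mem_insert_iff, Set.mem_singleton_iff]
    push_neg
    exact ⟨ne23, ne24, ne25, ne26⟩
  have m3 : Projectivization.mk ℂ ![-α, -(I * β), 1] n3 ∉
      ({Projectivization.mk ℂ ![α, -β, 1] n4,
        Projectivization.mk ℂ ![-(I * c), t * (1 + I), 1] n5,
        Projectivization.mk ℂ ![I * c, t * (1 - I), 1] n6} :
        Set (Projectivization ℂ (Fin 3 → ℂ))) := by
    simp only [Set.mem_insert_iff, Set.mem_singleton_iff]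
    push_neg
    exact ⟨ne34, ne35, ne36⟩
  have m4 : Projectivization.mk ℂ ![α, -β, 1] n4 ∉
      ({Projectivization.mk ℂ ![-(I * c), t * (1 + I), 1] n5,
        Projectivization.mk ℂ ![I * c, t * (1 - I), 1] n6} :
        Set (Projectivization ℂ (Fin 3 → ℂ))) := by
    simp only [Set.mem_insert_iff, Set.mem_singleton_iff]
    push_neg
    exact ⟨ne45, ne46⟩
  have m5 : Projectivization.mk ℂ ![-(I * c), t * (1 + I), 1] n5 ∉
      ({Projectivization.mk ℂ ![I * c, t * (1 - I), 1] n6} :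
        Set (Projectivization ℂ (Fin 3 → ℂ))) := by
    simp only [Set.mem_singleton_iff]
    exact ne56
  rw [Set.ncard_insert_of_notMem m1 (Set.toFinite _),
    Set.ncard_insert_of_notMem m2 (Set.toFinite _),
    Set.ncard_insert_of_notMem m3 (Set.toFinite _),
    Set.ncard_insert_of_notMem m4 (Set.toFinite _),
    Set.ncard_insert_of_notMem m5 (Set.toFinite _),
    Set.ncard_singleton]
end

section
/- Let α = √(1 + 2√3/3) and β = √(α³ − α) be positive real numbers, regarded as complex, and let L = (3α² − 1)·X − 2β·Y − (2α + β²)·Z be the tangent line to the cubic F = X³ − XZ² − Y²Z = 0 at the inflexion point P₃ = [α:β:1]. Then the set of points of ℙ²(ℂ) lying simultaneously on L = 0 and on F = 0 is exactly the singleton { [α:β:1] }. (This expresses that the tangent line at an inflexion point of the cubic meets the cubic only at that point, with local intersection/linking number 3, as used in the paper's computation of the indeterminacy subgroup.) -/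
/-- Key algebraic identity: a common point of the tangent line and the cubic
satisfies `(y - βz)³ = 0` (up to the nonzero factor `8β³`). -/
lemma key_identity (α β s x y z : ℂ) (hs : s^2 = 3) (hα : α^2 = 1 + 2*s/3)
    (hβ : β^2 = α^3 - α)
    (hF : x^3 - x*z^2 - y^2*z = 0)
    (hL : (3*α^2 - 1)*x - 2*β*y - (2*α + β^2)*z = 0) :
    8*β^3*(y - β*z)^3 = 0 := by
  linear_combination (3*α^2-1)^3 * hF
    - (((3*α^2-1)*x)^2 + ((3*α^2-1)*x)*(2*β*y+(2*α+β^2)*z)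
        + (2*β*y+(2*α+β^2)*z)^2 - (3*α^2-1)^2*z^2) * hL
    - ((-1 : ℂ)*z^3 + (36 : ℂ)*β^2*y^2*z + (-18 : ℂ)*β^3*y*z^2 + (9 : ℂ)*β^4*z^3 + (-12 : ℂ)*α*y^2*z + (42 : ℂ)*α*β*y*z^2 + (-3 : ℂ)*α*β^2*z^3 + (21 : ℂ)*α^2*z^3 + (36 : ℂ)*α^3*y^2*z + (-18 : ℂ)*α^3*β*y*z^2 + (9 : ℂ)*α^3*β^2*z^3 + (-21 : ℂ)*α^4*z^3 + (9 : ℂ)*α^6*z^3) * hβ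
    - ((-9 : ℂ)*y^2*z + (-2 : ℂ)*s*y^2*z + (4 : ℂ)*s^2*y^2*z + (18 : ℂ)*β*y*z^2 + (4 : ℂ)*β*s*y*z^2 + (-8 : ℂ)*β*s^2*y*z^2 + (1 : ℂ)*α*z^3 + (-6 : ℂ)*α*s*z^3 + (-4/3 : ℂ)*α*s^2*z^3 + (8/3 : ℂ)*α*s^3*z^3 + (-12 : ℂ)*α^2*y^2*z + (6 : ℂ)*α^2*s*y^2*z + (24 : ℂ)*α^2*β*y*z^2 + (-12 : ℂ)*α^2*β*s*y*z^2 + (3 : ℂ)*α^3*z^3 + (-8 : ℂ)*α^3*s*z^3 + (4 : ℂ)*α^3*s^2*z^3 + (9 : ℂ)*α^4*y^2*z + (-18 : ℂ)*α^4*β*y*z^2 + (-21 : ℂ)*α^5*z^3 + (6 : ℂ)*α^5*s*z^3 + (9 : ℂ)*α^7*z^3) * hα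
    - ((8/3 : ℂ)*y^2*z + (8/3 : ℂ)*s*y^2*z + (-16/3 : ℂ)*β*y*z^2 + (-16/3 : ℂ)*β*s*y*z^2 + (16/9 : ℂ)*α*s*z^3 + (16/9 : ℂ)*α*s^2*z^3) * hs

/-- The tangent line `L = (3α² - 1)X - 2βY - (2α + β²)Z` to the cubic
`F = X³ - XZ² - Y²Z = 0` at the inflexion point `P₃ = [α:β:1]` meets the cubic only at
that point: the set of common points of `L = 0` and `F = 0` in `ℙ²(ℂ)` is exactly the
singleton `{[α:β:1]}`. -/
theorem stmt_10 :
    let α : ℂ := (Real.sqrt (1 + 2 * Real.sqrt 3 / 3) : ℝ)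
    let β : ℂ := (Real.sqrt (Real.sqrt (1 + 2 * Real.sqrt 3 / 3) ^ 3 -
      Real.sqrt (1 + 2 * Real.sqrt 3 / 3)) : ℝ)
    {p : Projectivization ℂ (Fin 3 → ℂ) |
        Fval p.rep = 0 ∧
          (3 * α ^ 2 - 1) * p.rep 0 - 2 * β * p.rep 1 - (2 * α + β ^ 2) * p.rep 2 = 0} =
      {Projectivization.mk ℂ (![α, β, 1] : Fin 3 → ℂ)
        (fun h => by simpa using congrFun h 2)} := by
  intro α β
  -- real facts
  set a : ℝ := Real.sqrt (1 + 2 * Real.sqrt 3 / 3) with ha_def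
  set b : ℝ := Real.sqrt (a ^ 3 - a) with hb_def
  have hs3 : (0:ℝ) ≤ Real.sqrt 3 := Real.sqrt_nonneg 3
  have harg : (0:ℝ) ≤ 1 + 2 * Real.sqrt 3 / 3 := by positivity
  have ha2 : a ^ 2 = 1 + 2 * Real.sqrt 3 / 3 := Real.sq_sqrt harg
  have ha0 : 0 ≤ a := Real.sqrt_nonneg _
  have hs3' : (0:ℝ) < Real.sqrt 3 := Real.sqrt_pos.mpr (by norm_num)
  have ha1 : 1 ≤ a := by nlinarith [ha2]
  have hargb : (0:ℝ) < a ^ 3 - a := by nlinarith [ha2]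
  have hb2 : b ^ 2 = a ^ 3 - a := Real.sq_sqrt hargb.le
  have hb0 : 0 < b := Real.sqrt_pos.mpr hargb
  -- complex facts
  set s : ℂ := ((Real.sqrt 3 : ℝ) : ℂ) with hsdef
  have hs : s ^ 2 = 3 := by
    rw [hsdef]; norm_cast; rw [Real.sq_sqrt]; norm_num
  have hα : α ^ 2 = 1 + 2 * s / 3 := by
    show (a:ℂ)^2 = 1 + 2 * s / 3
    rw [hsdef]; norm_cast
  have hβ : β ^ 2 = α ^ 3 - α := by
    show (b:ℂ)^2 = (a:ℂ)^3 - (a:ℂ)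
    exact_mod_cast hb2
  have hβne : β ≠ 0 := by
    exact Complex.ofReal_ne_zero.mpr hb0.ne'
  have hDR : (0:ℝ) < 3 * a ^ 2 - 1 := by nlinarith [ha2]
  have hDne : (3 * α ^ 2 - 1 : ℂ) ≠ 0 := by
    have : ((3 * a ^ 2 - 1 : ℝ) : ℂ) ≠ 0 := Complex.ofReal_ne_zero.mpr hDR.ne'
    convert this using 1; push_cast; ring
  have hwne : (![α, β, 1] : Fin 3 → ℂ) ≠ 0 := fun h => by simpa using congrFun h 2
  ext p
  simp only [Set.mem_setOf_eq, Set.mem_singleton_iff]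
  constructor
  · rintro ⟨hF, hL⟩
    set x := p.rep 0; set y := p.rep 1; set z := p.rep 2
    have hF' : x^3 - x*z^2 - y^2*z = 0 := by
      have := hF; unfold Fval at this; linear_combination this
    have hL' : (3*α^2 - 1)*x - 2*β*y - (2*α + β^2)*z = 0 := by linear_combination hL
    have h8 := key_identity α β s x y z hs hα hβ hF' hL'
    have hy : y = β * z := by
      have h3 : (y - β*z)^3 = 0 := by
        rcases mul_eq_zero.mp h8 with h | h
        · exact absurd h (by simp [hβne])
        · exact h
      have h0 := pow_eq_zero_iff (n := 3) (by norm_num) |>.mp h3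
      exact sub_eq_zero.mp h0
    by_cases hz : z = 0
    · exfalso
      have hy0 : y = 0 := by rw [hy, hz, mul_zero]
      have hx0 : x = 0 := by
        have : (3*α^2 - 1) * x = 0 := by rw [hz, hy0] at hL'; linear_combination hL'
        exact (mul_eq_zero.mp this).resolve_left hDne
      exact p.rep_nonzero (by funext i; fin_cases i <;> assumption)
    · have hx : x = α * z := by
        have hc : (3*α^2 - 1) * x = (3*α^2 - 1) * (α * z) := by
          rw [hy] at hL'
          linear_combination hL' + 3 * z * hβ
        exact mul_left_cancel₀ hDne hc
      rw [← Projectivization.mk_rep p, Projectivization.mk_eq_mk_iff']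
      refine ⟨z, ?_⟩
      funext i
      fin_cases i <;>
        simp only [Pi.smul_apply, smul_eq_mul, Matrix.cons_val_zero, Matrix.cons_val_one,
          Matrix.head_cons, Matrix.cons_val_two, Matrix.tail_cons]
      · show z * α = x
        rw [hx]; ring
      · show z * β = y
        rw [hy]; ring
      · show z * 1 = z
        exact mul_one z
  · intro h
    have hmk : Projectivization.mk ℂ p.rep p.rep_nonzero =
        Projectivization.mk ℂ (![α, β, 1] : Fin 3 → ℂ) hwne := by
      rw [Projectivization.mk_rep, h]
    obtain ⟨c, hc⟩ := (Projectivization.mk_eq_mk_iff ℂ _ _ p.rep_nonzero hwne).mp hmk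
    have h0 : p.rep 0 = (c : ℂ) * α := by rw [← hc]; simp [Units.smul_def]
    have h1 : p.rep 1 = (c : ℂ) * β := by rw [← hc]; simp [Units.smul_def]
    have h2 : p.rep 2 = (c : ℂ) * 1 := by rw [← hc]; simp [Units.smul_def]
    constructor
    · unfold Fval
      rw [h0, h1, h2]
      linear_combination (-(c : ℂ)^3) * hβ
    · rw [h0, h1, h2]
      linear_combination (-3*(c : ℂ)) * hβ
end
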